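/- For every natural number i, the entry in the zeroth column of row i of the grid is the base-3/2 representation of 2i: G(i,0) = (2i)_{3/2}. -/

import Mathlib

abbrev Digit := Fin 3

open Fin.NatCast

/-- Helper for `addTwo`, acting on the reversed (least significant digit first) string:
replace each digit `d` by `d - 1 (mod 3)` up to and including the first digit 0;
if no digit 0 occurs, a digit 0 is first prepended at the most significant end
(and then becomes 2). -/
def addTwoAux : List Digit → List Digit
  | [] => [2]
  | d :: rest => if d = 0 then (d + 2) :: rest else (d + 2) :: addTwoAux rest

/-- Adding two in base 3/2: all digits at or to the right of the rightmost 0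
(including that 0) are decreased by 1 modulo 3; if there is no 0, a 0 is first
prepended. -/
def addTwo (w : List Digit) : List Digit := (addTwoAux w.reverse).reverse

/-- Binary representation of `j` (digits 0 and 1, most significant first, no leading
zeros), with `binRep 0 = [0]`. -/
def binRep (j : ℕ) : List Digit :=
  if j = 0 then [0] else (Nat.digits 2 j).reverse.map (fun d => (d : Digit))

/-- The grid: row 0 consists of the binary representations in increasing order, and
each subsequent row is obtained entrywise by adding two in base 3/2. -/
def G : ℕ → ℕ → List Digit
  | 0, j => binRep j
  | i + 1, j => addTwo (G i j)

/-- Base-3/2 representation of a natural number via `rep`: `rep 0` is the empty string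
and `rep N = rep (2 * (N - N % 3) / 3) ++ [N % 3]` for `N > 0`. -/
def rep32 : ℕ → List Digit
  | 0 => []
  | n + 1 => rep32 (2 * ((n + 1) / 3)) ++ [(((n + 1) % 3 : ℕ) : Digit)]
decreasing_by omega

/-- The base-3/2 representation `(N)_{3/2}`, with `(0)_{3/2}` the single digit 0. -/
def baseThreeHalves (N : ℕ) : List Digit := if N = 0 then [0] else rep32 N

/-!
The last base-3/2 digit of `N` is `N % 3` and the digits before it represent `2 * (N / 3)`.
Passing from `N` to `N + 2` lowers the last digit by one modulo 3; if that digit was not 0,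
then `(N + 2) / 3 = N / 3 + 1`, so the prefix must pass from `2 * (N / 3)` to
`2 * (N / 3) + 2`, which is again adding two. Thus `addTwo` really adds two to the represented
number, and the zeroth column, starting from `binRep 0 = (0)_{3/2}`, runs through `(2 * i)_{3/2}`.
-/

lemma reverse_rep32_of_ne_zero {N : ℕ} (hN : N ≠ 0) :
    (rep32 N).reverse = ((N % 3 : ℕ) : Digit) :: (rep32 (2 * (N / 3))).reverse := by
  obtain ⟨n, rfl⟩ := Nat.exists_eq_succ_of_ne_zero hN
  rw [rep32, List.reverse_append, List.reverse_singleton, List.singleton_append]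

lemma addTwoAux_reverse_rep32 (N : ℕ) :
    addTwoAux (rep32 N).reverse = (rep32 (N + 2)).reverse := by
  induction N using Nat.strong_induction_on with
  | _ N ih =>
  rcases Nat.eq_zero_or_pos N with rfl | hN
  · simp [rep32, addTwoAux]
  rw [reverse_rep32_of_ne_zero hN.ne', reverse_rep32_of_ne_zero (by omega : N + 2 ≠ 0)]
  obtain h | h | h : N % 3 = 0 ∨ N % 3 = 1 ∨ N % 3 = 2 := by omega
  · rw [show (N + 2) / 3 = N / 3 by omega, show (N + 2) % 3 = 2 by omega, h]
    simp [addTwoAux]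
  all_goals
    have carry : 2 * ((N + 2) / 3) = 2 * (N / 3) + 2 := by omega
    rw [carry, ← ih _ (by omega), h]
    simp [addTwoAux, Nat.add_mod, h]

lemma addTwo_baseThreeHalves (N : ℕ) :
    addTwo (baseThreeHalves N) = baseThreeHalves (N + 2) := by
  rcases Nat.eq_zero_or_pos N with rfl | hN
  · simp [baseThreeHalves, addTwo, addTwoAux, rep32]
  · simp [baseThreeHalves, hN.ne', addTwo, addTwoAux_reverse_rep32]

/-- The entry in the zeroth column of row `i` of the grid is the base-3/2
representation of `2 * i`. -/
theorem zeroth_column_rep (i : ℕ) : G i 0 = baseThreeHalves (2 * i) := by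
  induction i with
  | zero => simp [G, binRep, baseThreeHalves]
  | succ n ih => rw [G, ih, addTwo_baseThreeHalves, Nat.mul_succ]
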